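/- arXiv:1102.4803 — 2 statements merged into one kernel-verified Lean document; each statement's English description precedes it below -/
import Mathlib

section
/- (FKG/Harris inequality) Consider the product Bernoulli(p) measure P_p on configurations ω : ℤ × ℤ → Bool. If A and B are measurable events that are both increasing, or both decreasing, then P_p(A ∩ B) ≥ P_p(A)·P_p(B). -/
open MeasureTheory

/-- Configurations of site percolation on `ℤ²`: `true` = open (black). -/
abbrev Config : Type := ℤ × ℤ → Bool

/-- Two sites of `ℤ²` are adjacent iff `|v₁ − w₁| + |v₂ − w₂| = 1`. -/
def Adjacent (v w : ℤ × ℤ) : Prop := |v.1 - w.1| + |v.2 - w.2| = 1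

/-- `OpenConn ω S v w` : there is a path of adjacent open sites staying in `S`
joining `v` to `w` (in the configuration `ω`). -/
def OpenConn (ω : Config) (S : Set (ℤ × ℤ)) : ℤ × ℤ → ℤ × ℤ → Prop :=
  Relation.ReflTransGen fun a b => Adjacent a b ∧ b ∈ S ∧ ω b = true

/-- The open cluster of the site `v` within the region `S`, in the configuration `ω`:
the set of open sites of `S` joined to `v` by a path of adjacent open sites staying in
`S`. It is empty if `v` is closed or `v ∉ S`. -/
def cluster (ω : Config) (S : Set (ℤ × ℤ)) (v : ℤ × ℤ) : Set (ℤ × ℤ) :=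
  {w | v ∈ S ∧ ω v = true ∧ OpenConn ω S v w}

/-- `IsBernoulliProduct p μ` : `μ` is the product measure on configurations under which
each site of `ℤ²` is independently open with probability `p`. -/
def IsBernoulliProduct (p : ℝ) (μ : Measure Config) : Prop :=
  IsProbabilityMeasure μ ∧
    ∀ (s : Finset (ℤ × ℤ)) (f : (ℤ × ℤ) → Bool),
      μ {ω | ∀ v ∈ s, ω v = f v} =
        ∏ v ∈ s, ENNReal.ofReal (if f v then p else 1 - p)

/-- The critical probability `p_c` of site percolation on `ℤ²`:
`p_c = sSup {p ∈ [0,1] : P_p(|C(0,0)| = ∞) = 0}`. -/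
noncomputable def siteCriticalProbability : ℝ :=
  sSup {p : ℝ | p ∈ Set.Icc (0 : ℝ) 1 ∧
    ∀ μ : Measure Config, IsBernoulliProduct p μ →
      μ {ω | (cluster ω Set.univ (0, 0)).Infinite} = 0}

/-- The `N × N` box `{1,…,N} × {1,…,N}` in `ℤ²` (the pixel screen). -/
def box (N : ℕ) : Set (ℤ × ℤ) :=
  {v | 1 ≤ v.1 ∧ v.1 ≤ (N : ℤ) ∧ 1 ≤ v.2 ∧ v.2 ≤ (N : ℤ)}

/-- The box `{0,…,n} × {0,…,n}` in `ℤ²`. -/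
def box0 (n : ℕ) : Set (ℤ × ℤ) :=
  {v | 0 ≤ v.1 ∧ v.1 ≤ (n : ℤ) ∧ 0 ≤ v.2 ∧ v.2 ≤ (n : ℤ)}

/-- An event of configurations is increasing if it is stable under opening more sites
(`false ≤ true`, pointwise order). -/
def IncreasingEvent (A : Set Config) : Prop :=
  ∀ ω ω' : Config, ω ≤ ω' → ω ∈ A → ω' ∈ A

/-- An event of configurations is decreasing if it is stable under closing sites. -/
def DecreasingEvent (A : Set Config) : Prop :=
  ∀ ω ω' : Config, ω' ≤ ω → ω ∈ A → ω' ∈ A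

/-!
Write `𝓕ₛ` for the σ-algebra of the sites of a finite set `s`, and put `gₛ = P(A | 𝓕ₛ)`,
`hₛ = P(B | 𝓕ₛ)`. The mean `E[gₛ hₛ]` is `P(A) P(B)` for `s = ∅`, and it does not decrease when a
site `a` is added to `s`: given `𝓕ₛ`, the refined conditional probabilities are functions of the
single bit `ω a`, both increasing because switching `a` on maps `A` into itself and, by
independence, `μ (E ∩ {ω a = b}) = μ {ω a = b} * μ (update · a b ⁻¹' E)`; and two increasing
functions of one bit are positively correlated. Once `B` is `ε`-close to a cylinder over `s`,
`E[gₛ hₛ] ≤ P(A ∩ B) + ε`. Decreasing events are handled by passing to complements.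
-/

open MeasureTheory Set
open scoped symmDiff

section Cylinders

variable {ι : Type*}

def cyl (s : Finset ι) (f : ι → Bool) : Set (ι → Bool) := {ω | ∀ v ∈ s, ω v = f v}

theorem measurableSet_cyl (s : Finset ι) (f : ι → Bool) : MeasurableSet (cyl s f) := by
  show MeasurableSet ((s : Set ι).pi fun v => {f v})
  exact .pi s.countable_toSet fun v _ => measurableSet_singleton (f v)

theorem measurableSet_eval_eq (a : ι) (b : Bool) : MeasurableSet {ω : ι → Bool | ω a = b} :=
  measurableSet_eq_fun (measurable_pi_apply a) measurable_const

@[simp]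
theorem cyl_empty (f : ι → Bool) : cyl ∅ f = univ := by
  ext; simp [cyl]

theorem cyl_congr {s : Finset ι} {f g : ι → Bool} (h : ∀ v ∈ s, f v = g v) :
    cyl s f = cyl s g := by
  ext ω
  exact forall₂_congr fun v hv => by rw [h v hv]

theorem isPiSystem_cyl : IsPiSystem {C : Set (ι → Bool) | ∃ s f, cyl s f = C} := by
  classical
  rintro _ ⟨s, f, rfl⟩ _ ⟨s', f', rfl⟩ ⟨ω, hω, hω'⟩
  refine ⟨s ∪ s', ω, ?_⟩
  rw [cyl_congr (f := f) (g := ω) fun v hv => (hω v hv).symm,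
    cyl_congr (f := f') (g := ω) fun v hv => (hω' v hv).symm]
  ext η
  simp [cyl, or_imp, forall_and]

theorem generateFrom_cyl :
    MeasurableSpace.generateFrom {C : Set (ι → Bool) | ∃ s f, cyl s f = C} =
      MeasurableSpace.pi := by
  refine le_antisymm (MeasurableSpace.generateFrom_le ?_) (iSup_le fun v => ?_)
  · rintro _ ⟨s, f, rfl⟩
    exact measurableSet_cyl s f
  · refine (@measurable_to_countable' Bool _ _ _ (MeasurableSpace.generateFrom _)
      (fun ω : ι → Bool => ω v) fun b => ?_).comap_le
    exact MeasurableSpace.measurableSet_generateFrom ⟨{v}, fun _ => b, by ext; simp [cyl]⟩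

theorem cyl_subset_or_disjoint {s : Finset ι} {S : Set (s → Bool)} (f : ι → Bool) :
    cyl s f ⊆ cylinder s S ∨ Disjoint (cyl s f) (cylinder s S) := by
  have hrestrict : ∀ ω ∈ cyl s f, s.restrict ω = s.restrict f := fun ω hω =>
    funext fun v => hω v v.2
  by_cases hf : s.restrict f ∈ S
  · exact .inl fun ω hω => by simpa [hrestrict ω hω] using hf
  · exact .inr <| disjoint_left.2 fun ω hω => by simpa [hrestrict ω hω] using hf

variable [DecidableEq ι]

theorem cyl_insert (a : ι) (s : Finset ι) (f : ι → Bool) :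
    cyl (insert a s) f = cyl s f ∩ {ω | ω a = f a} := by
  ext ω
  simp [cyl, and_comm]

variable {a : ι}

theorem cyl_update_of_notMem {s : Finset ι} (ha : a ∉ s) (f : ι → Bool) (b : Bool) :
    cyl s (Function.update f a b) = cyl s f :=
  cyl_congr fun _ hv => Function.update_of_ne (ne_of_mem_of_not_mem hv ha) _ _

theorem cyl_insert_of_notMem {t : Finset ι} (ha : a ∉ t) (s : Finset ι) :
    cyl (insert a s) (· ∈ t) = cyl s (· ∈ t) ∩ {ω | ω a = false} := by
  simp [cyl_insert, ha]

theorem cyl_insert_insert {s : Finset ι} (ha : a ∉ s) (t : Finset ι) :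
    cyl (insert a s) (· ∈ insert a t) = cyl s (· ∈ t) ∩ {ω | ω a = true} := by
  rw [cyl_insert, cyl_congr (g := (· ∈ t)) fun v hv => by simp [ne_of_mem_of_not_mem hv ha]]
  simp

theorem preimage_update_cyl {s : Finset ι} {f : ι → Bool} {b : Bool} (h : a ∈ s → f a = b) :
    (Function.update · a b) ⁻¹' cyl s f = cyl (s.erase a) f := by
  ext ω
  simp only [cyl, mem_preimage, mem_ofPred_eq, Finset.mem_erase, and_imp]
  refine forall_congr' fun v => ?_
  rcases eq_or_ne v a with rfl | hv
  · simpa [eq_comm] using h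
  · simp [hv]

theorem preimage_update_cyl_of_notMem {s : Finset ι} (ha : a ∉ s) (f : ι → Bool) (b : Bool) :
    (Function.update · a b) ⁻¹' cyl s f = cyl s f := by
  rw [preimage_update_cyl (absurd · ha), s.erase_eq_of_notMem ha]

theorem cyl_inter_eval_eq {s : Finset ι} {f : ι → Bool} {b : Bool} (h : a ∈ s → f a = b) :
    cyl s f ∩ {ω | ω a = b} = cyl (s.erase a) f ∩ {ω | ω a = b} := by
  ext ω
  simp only [cyl, mem_inter_iff, mem_ofPred_eq, Finset.mem_erase, and_imp]
  refine and_congr_left fun hωa => forall_congr' fun v => ?_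
  rcases eq_or_ne v a with rfl | hv
  · simpa [hωa, eq_comm] using h
  · simp [hv]

end Cylinders

/-- The difference of the two sides is `(x₀ w₁ - x₁ w₀) (y₀ w₁ - y₁ w₀) / (w₀ w₁ (w₀ + w₁))`. -/
theorem add_mul_add_div_add_le {𝕜 : Type*} [Field 𝕜] [LinearOrder 𝕜] [IsStrictOrderedRing 𝕜]
    {x₀ x₁ y₀ y₁ w₀ w₁ : 𝕜} (hx₀ : 0 ≤ x₀) (hx₁ : 0 ≤ x₁) (hy₀ : 0 ≤ y₀) (hy₁ : 0 ≤ y₁)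
    (hxw₀ : x₀ ≤ w₀) (hxw₁ : x₁ ≤ w₁) (hyw₀ : y₀ ≤ w₀) (hyw₁ : y₁ ≤ w₁)
    (hx : x₀ * w₁ ≤ x₁ * w₀) (hy : y₀ * w₁ ≤ y₁ * w₀) :
    (x₀ + x₁) * (y₀ + y₁) / (w₀ + w₁) ≤ x₀ * y₀ / w₀ + x₁ * y₁ / w₁ := by
  rcases (hx₀.trans hxw₀).eq_or_lt with rfl | hw₀
  · obtain rfl : x₀ = 0 := le_antisymm hxw₀ hx₀
    obtain rfl : y₀ = 0 := le_antisymm hyw₀ hy₀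
    simp
  rcases (hx₁.trans hxw₁).eq_or_lt with rfl | hw₁
  · obtain rfl : x₁ = 0 := le_antisymm hxw₁ hx₁
    obtain rfl : y₁ = 0 := le_antisymm hyw₁ hy₁
    simp
  rw [div_add_div _ _ hw₀.ne' hw₁.ne', div_le_div_iff₀ (by positivity) (by positivity)]
  nlinarith [mul_nonneg (sub_nonneg.2 hx) (sub_nonneg.2 hy), mul_pos hw₀ hw₁]

namespace MeasureTheory

section General

variable {α : Type*} [MeasurableSpace α] {μ : Measure α}

theorem measureReal_inter_mul_div_le [IsFiniteMeasure μ] {A B D c : Set α}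
    (hcD : c ⊆ D ∨ Disjoint c D) :
    μ.real (A ∩ c) * μ.real (B ∩ c) / μ.real c ≤ μ.real (A ∩ B ∩ c) + μ.real (B ∆ D ∩ c) := by
  rcases hcD with hcD | hcD
  · calc μ.real (A ∩ c) * μ.real (B ∩ c) / μ.real c
        ≤ μ.real (A ∩ c) := div_le_of_le_mul₀ measureReal_nonneg measureReal_nonneg <|
          mul_le_mul_of_nonneg_left (measureReal_mono inter_subset_right) measureReal_nonneg
      _ ≤ μ.real (A ∩ B ∩ c ∪ B ∆ D ∩ c) := by
          refine measureReal_mono fun ω ⟨hωA, hωc⟩ => ?_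
          by_cases hωB : ω ∈ B
          · exact .inl ⟨⟨hωA, hωB⟩, hωc⟩
          · exact .inr ⟨.inr ⟨hcD hωc, hωB⟩, hωc⟩
      _ ≤ _ := measureReal_union_le _ _
  · calc μ.real (A ∩ c) * μ.real (B ∩ c) / μ.real c
        ≤ μ.real (B ∩ c) := div_le_of_le_mul₀ measureReal_nonneg measureReal_nonneg <| by
          rw [mul_comm]
          exact mul_le_mul_of_nonneg_left (measureReal_mono inter_subset_right) measureReal_nonneg
      _ ≤ μ.real (B ∆ D ∩ c) := measureReal_mono fun ω ⟨hωB, hωc⟩ =>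
          ⟨.inl ⟨hωB, disjoint_left.1 hcD hωc⟩, hωc⟩
      _ ≤ _ := le_add_of_nonneg_left measureReal_nonneg

theorem mul_measureReal_le_of_compl [IsProbabilityMeasure μ] {A B : Set α}
    (hA : MeasurableSet A) (hB : MeasurableSet B)
    (h : μ.real Aᶜ * μ.real Bᶜ ≤ μ.real (Aᶜ ∩ Bᶜ)) :
    μ.real A * μ.real B ≤ μ.real (A ∩ B) := by
  rw [← compl_union, probReal_compl_eq_one_sub hA, probReal_compl_eq_one_sub hB,
    probReal_compl_eq_one_sub (hA.union hB)] at h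
  linarith [measureReal_union_add_inter (μ := μ) (s := A) hB]

end General

variable {ι : Type*} {μ : Measure (ι → Bool)} [IsFiniteMeasure μ]

theorem measureReal_inter_eval_false_add_true (F : Set (ι → Bool)) (a : ι) :
    μ.real (F ∩ {ω | ω a = false}) + μ.real (F ∩ {ω | ω a = true}) = μ.real F := by
  have : {ω : ι → Bool | ω a = false} = {ω | ω a = true}ᶜ := by ext; simp
  rw [this, ← sdiff_eq, add_comm]
  exact measureReal_inter_add_sdiff (measurableSet_eval_eq a true)

theorem sum_measureReal_inter_cyl [DecidableEq ι] (F : Set (ι → Bool)) (s : Finset ι) :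
    ∑ t ∈ s.powerset, μ.real (F ∩ cyl s (· ∈ t)) = μ.real F := by
  induction s using Finset.induction_on with
  | empty => simp
  | insert a s ha ih =>
    rw [Finset.sum_powerset_insert ha, ← Finset.sum_add_distrib, ← ih]
    refine Finset.sum_congr rfl fun t ht => ?_
    have hat : a ∉ t := fun h => ha (Finset.mem_powerset.1 ht h)
    rw [cyl_insert_of_notMem hat, cyl_insert_insert ha, ← inter_assoc, ← inter_assoc,
      measureReal_inter_eval_false_add_true]

end MeasureTheory

section CondCorr

variable {ι : Type*} [DecidableEq ι] {μ : Measure (ι → Bool)}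

/-- `E[P(A | 𝓕ₛ) P(B | 𝓕ₛ)]`, the cylinder `cyl s (· ∈ t)` being the atom of `𝓕ₛ` on which the
open sites of `s` are those of `t`. Atoms of measure zero contribute `0` (as `x / 0 = 0`). -/
noncomputable def condCorr (μ : Measure (ι → Bool)) (A B : Set (ι → Bool)) (s : Finset ι) : ℝ :=
  ∑ t ∈ s.powerset,
    μ.real (A ∩ cyl s (· ∈ t)) * μ.real (B ∩ cyl s (· ∈ t)) / μ.real (cyl s (· ∈ t))

@[simp]
theorem condCorr_empty [IsProbabilityMeasure μ] (A B : Set (ι → Bool)) :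
    condCorr μ A B ∅ = μ.real A * μ.real B := by
  simp [condCorr]

theorem condCorr_le_measureReal_inter_add [IsFiniteMeasure μ] (A B : Set (ι → Bool))
    (s : Finset ι) (S : Set (s → Bool)) :
    condCorr μ A B s ≤ μ.real (A ∩ B) + μ.real (B ∆ cylinder s S) := by
  calc condCorr μ A B s
      ≤ ∑ t ∈ s.powerset, (μ.real (A ∩ B ∩ cyl s (· ∈ t)) +
          μ.real (B ∆ cylinder s S ∩ cyl s (· ∈ t))) :=
        Finset.sum_le_sum fun t _ => measureReal_inter_mul_div_le (cyl_subset_or_disjoint _)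
    _ = μ.real (A ∩ B) + μ.real (B ∆ cylinder s S) := by
        rw [Finset.sum_add_distrib, sum_measureReal_inter_cyl, sum_measureReal_inter_cyl]

end CondCorr

theorem DecreasingEvent.compl {A : Set Config} (hA : DecreasingEvent A) : IncreasingEvent Aᶜ :=
  fun ω ω' hle hω hω' => hω (hA ω' ω hle hω')

namespace IsBernoulliProduct

variable {p : ℝ} {μ : Measure Config} (hμ : IsBernoulliProduct p μ)
include hμ

theorem measure_cyl_inter_eval_of_notMem {a : ℤ × ℤ} {s : Finset (ℤ × ℤ)} (ha : a ∉ s)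
    (f : Config) (b : Bool) : μ (cyl s f ∩ {ω | ω a = b}) = μ {ω | ω a = b} * μ (cyl s f) := by
  have h₁ : cyl s f ∩ {ω | ω a = b} = cyl (insert a s) (Function.update f a b) := by
    rw [cyl_insert, Function.update_self, cyl_update_of_notMem ha]
  have h₂ : {ω : Config | ω a = b} = cyl {a} (Function.update f a b) := by ext; simp [cyl]
  rw [h₁, h₂, ← cyl_update_of_notMem ha f b]
  simp only [cyl, hμ.2, Finset.prod_insert ha, Finset.prod_singleton]

theorem measure_cyl_inter_eval (s : Finset (ℤ × ℤ)) (f : Config) (a : ℤ × ℤ) (b : Bool) :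
    μ (cyl s f ∩ {ω | ω a = b}) = μ {ω | ω a = b} * μ ((Function.update · a b) ⁻¹' cyl s f) := by
  by_cases h : a ∈ s → f a = b
  · rw [cyl_inter_eval_eq h, preimage_update_cyl h,
      hμ.measure_cyl_inter_eval_of_notMem (s.notMem_erase a)]
  · obtain ⟨has, hfa⟩ := Classical.not_imp.1 h
    have h₁ : cyl s f ∩ {ω | ω a = b} = ∅ :=
      eq_empty_of_forall_notMem fun ω ⟨hω, hωa⟩ => hfa ((hω a has).symm.trans hωa)
    have h₂ : (Function.update · a b) ⁻¹' cyl s f = ∅ :=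
      eq_empty_of_forall_notMem fun ω hω => hfa (by simpa using (hω a has).symm)
    simp [h₁, h₂]

theorem measure_inter_eval {E : Set Config} (hE : MeasurableSet E) (a : ℤ × ℤ) (b : Bool) :
    μ (E ∩ {ω | ω a = b}) = μ {ω | ω a = b} * μ ((Function.update · a b) ⁻¹' E) := by
  have := hμ.1
  have hupd : Measurable (Function.update · a b : Config → Config) := measurable_update_left
  have hcyl : ∀ s f, μ.restrict {ω | ω a = b} (cyl s f) =
      (μ {ω | ω a = b} • μ.map (Function.update · a b)) (cyl s f) := fun s f => by
    rw [Measure.restrict_apply (measurableSet_cyl s f), Measure.smul_apply,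
      Measure.map_apply hupd (measurableSet_cyl s f), smul_eq_mul, hμ.measure_cyl_inter_eval]
  have key : μ.restrict {ω | ω a = b} = μ {ω | ω a = b} • μ.map (Function.update · a b) := by
    refine ext_of_generate_finite _ generateFrom_cyl.symm isPiSystem_cyl ?_ ?_
    · rintro _ ⟨s, f, rfl⟩
      exact hcyl s f
    · simpa using hcyl ∅ fun _ => b
  rw [← Measure.restrict_apply hE, key, Measure.smul_apply, Measure.map_apply hupd hE, smul_eq_mul]

theorem measureReal_inter_eval {E : Set Config} (hE : MeasurableSet E) (a : ℤ × ℤ) (b : Bool) :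
    μ.real (E ∩ {ω | ω a = b}) =
      μ.real {ω | ω a = b} * μ.real ((Function.update · a b) ⁻¹' E) := by
  simp only [measureReal_def, hμ.measure_inter_eval hE, ENNReal.toReal_mul]

variable {a : ℤ × ℤ} {c : Set Config} (hc : MeasurableSet c)
  (hca : ∀ b, (Function.update · a b) ⁻¹' c = c)
include hc hca

theorem measureReal_inter_eval_false_mul_le {A : Set Config} (hA : MeasurableSet A)
    (hAi : IncreasingEvent A) :
    μ.real (A ∩ c ∩ {ω | ω a = false}) * μ.real (c ∩ {ω | ω a = true}) ≤
      μ.real (A ∩ c ∩ {ω | ω a = true}) * μ.real (c ∩ {ω | ω a = false}) := by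
  have := hμ.1
  have hmono : μ.real ((Function.update · a false) ⁻¹' A ∩ c) ≤
      μ.real ((Function.update · a true) ⁻¹' A ∩ c) :=
    measureReal_mono <| inter_subset_inter_left _ fun ω hω =>
      hAi _ _ (Function.update_mono (Bool.false_le true)) hω
  simp only [hμ.measureReal_inter_eval (hA.inter hc), hμ.measureReal_inter_eval hc,
    preimage_inter, hca]
  calc _ = μ.real {ω | ω a = false} * μ.real {ω | ω a = true} * μ.real c *
        μ.real ((Function.update · a false) ⁻¹' A ∩ c) := by ring
    _ ≤ μ.real {ω | ω a = false} * μ.real {ω | ω a = true} * μ.real c *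
        μ.real ((Function.update · a true) ⁻¹' A ∩ c) := by gcongr
    _ = _ := by ring

theorem measureReal_mul_div_le_add {A B : Set Config} (hA : MeasurableSet A)
    (hB : MeasurableSet B) (hAi : IncreasingEvent A) (hBi : IncreasingEvent B) :
    μ.real (A ∩ c) * μ.real (B ∩ c) / μ.real c ≤
      μ.real (A ∩ c ∩ {ω | ω a = false}) * μ.real (B ∩ c ∩ {ω | ω a = false}) /
          μ.real (c ∩ {ω | ω a = false}) +
        μ.real (A ∩ c ∩ {ω | ω a = true}) * μ.real (B ∩ c ∩ {ω | ω a = true}) /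
          μ.real (c ∩ {ω | ω a = true}) := by
  have := hμ.1
  have hsub : ∀ (E : Set Config) b, μ.real (E ∩ c ∩ {ω | ω a = b}) ≤ μ.real (c ∩ {ω | ω a = b}) :=
    fun E b => measureReal_mono (inter_subset_inter_left _ inter_subset_right)
  rw [← measureReal_inter_eval_false_add_true (A ∩ c) a,
    ← measureReal_inter_eval_false_add_true (B ∩ c) a,
    ← measureReal_inter_eval_false_add_true c a]
  exact add_mul_add_div_add_le measureReal_nonneg measureReal_nonneg measureReal_nonneg
    measureReal_nonneg (hsub A false) (hsub A true) (hsub B false) (hsub B true)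
    (hμ.measureReal_inter_eval_false_mul_le hc hca hA hAi)
    (hμ.measureReal_inter_eval_false_mul_le hc hca hB hBi)

omit hc hca

variable {A B : Set Config} (hA : MeasurableSet A) (hB : MeasurableSet B)
  (hAi : IncreasingEvent A) (hBi : IncreasingEvent B)
include hA hB hAi hBi

theorem condCorr_le_condCorr_insert {s : Finset (ℤ × ℤ)} (ha : a ∉ s) :
    condCorr μ A B s ≤ condCorr μ A B (insert a s) := by
  rw [condCorr, condCorr, Finset.sum_powerset_insert ha, ← Finset.sum_add_distrib]
  refine Finset.sum_le_sum fun t ht => ?_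
  have hat : a ∉ t := fun h => ha (Finset.mem_powerset.1 ht h)
  simp only [cyl_insert_of_notMem hat, cyl_insert_insert ha, ← inter_assoc]
  exact hμ.measureReal_mul_div_le_add (measurableSet_cyl _ _)
    (preimage_update_cyl_of_notMem ha _) hA hB hAi hBi

theorem mul_measureReal_le_condCorr (s : Finset (ℤ × ℤ)) :
    μ.real A * μ.real B ≤ condCorr μ A B s := by
  have := hμ.1
  induction s using Finset.induction_on with
  | empty => rw [condCorr_empty]
  | insert a s ha ih => exact ih.trans (hμ.condCorr_le_condCorr_insert hA hB hAi hBi ha)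

theorem mul_measureReal_le_of_increasing : μ.real A * μ.real B ≤ μ.real (A ∩ B) := by
  have := hμ.1
  refine le_of_forall_pos_le_add fun ε hε => ?_
  obtain ⟨D, hD, hBD⟩ := (Measure.MeasureDense.of_generateFrom_isSetAlgebra_finite μ
    isSetAlgebra_measurableCylinders generateFrom_measurableCylinders.symm).approx
      B hB (measure_ne_top μ B) ε hε
  obtain ⟨s, S, -, rfl⟩ := (mem_measurableCylinders D).1 hD
  calc μ.real A * μ.real B ≤ condCorr μ A B s := hμ.mul_measureReal_le_condCorr hA hB hAi hBi s
    _ ≤ μ.real (A ∩ B) + μ.real (B ∆ cylinder s S) := condCorr_le_measureReal_inter_add A B s S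
    _ ≤ μ.real (A ∩ B) + ε := by
        gcongr
        exact (ENNReal.toReal_lt_of_lt_ofReal hBD).le

end IsBernoulliProduct

theorem fkg_inequality_general (p : ℝ)
    (μ : Measure Config) (hμ : IsBernoulliProduct p μ)
    (A B : Set Config) (hA : MeasurableSet A) (hB : MeasurableSet B)
    (hmono : (IncreasingEvent A ∧ IncreasingEvent B) ∨
      (DecreasingEvent A ∧ DecreasingEvent B)) :
    μ A * μ B ≤ μ (A ∩ B) := by
  have := hμ.1
  suffices h : μ.real A * μ.real B ≤ μ.real (A ∩ B) by
    simpa [ENNReal.ofReal_mul, ofReal_measureReal] using ENNReal.ofReal_le_ofReal h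
  rcases hmono with ⟨hAi, hBi⟩ | ⟨hAd, hBd⟩
  · exact hμ.mul_measureReal_le_of_increasing hA hB hAi hBi
  · exact mul_measureReal_le_of_compl hA hB <|
      hμ.mul_measureReal_le_of_increasing hA.compl hB.compl hAd.compl hBd.compl

/-- **FKG/Harris inequality.** Consider the product Bernoulli(`p`) measure
`P_p` on configurations `ω : ℤ × ℤ → Bool`. If `A` and `B` are measurable events that are
both increasing, or both decreasing, then `P_p(A ∩ B) ≥ P_p(A)·P_p(B)`. -/
theorem fkg_inequality (p : ℝ) (hp : p ∈ Set.Icc (0 : ℝ) 1)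
    (μ : Measure Config) (hμ : IsBernoulliProduct p μ)
    (A B : Set Config) (hA : MeasurableSet A) (hB : MeasurableSet B)
    (hmono : (IncreasingEvent A ∧ IncreasingEvent B) ∨
      (DecreasingEvent A ∧ DecreasingEvent B)) :
    μ A * μ B ≤ μ (A ∩ B) :=
  fkg_inequality_general p μ hμ A B hA hB hmono
end

section
/- Consider the product Bernoulli(p) measure P_p on configurations ω : ℤ × ℤ → Bool. If (A_i)_{i ∈ I} is a finite family of measurable decreasing events, then P_p(⋂_{i ∈ I} A_i) ≥ ∏_{i ∈ I} P_p(A_i). -/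
/-!
Harris's inequality `μ A * μ B ≤ μ (A ∩ B)` for two decreasing events, iterated along the
family. For events depending only on the sites of a finite `Λ` it is the FKG inequality on the cube
`Λ → Bool`, whose Bernoulli weight satisfies `w (a ⊓ b) * w (a ⊔ b) = w a * w b`.
A measurable decreasing event `A` is approximated by such events in two steps. Cylinders generate
the product σ-algebra, so some cylinder on `Λ` is close to `A`. Conditionally on `ω|_Λ = a`, the
configuration is distributed as `μ` with the sites of `Λ` overwritten by `a`; replacing the
cylinder by the majority vote "`A` is at least as likely as `Aᶜ` under this conditional law"
only decreases the error, and since `A` is decreasing the accepted patterns form a lower set.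
-/

open MeasureTheory

open MeasureTheory Function OrderDual
open scoped ENNReal symmDiff

section Atoms

variable {ι : Type*}

def atom (t : Finset ι) (f : ι → Bool) : Set (ι → Bool) := {ω | ∀ i ∈ t, ω i = f i}

lemma measurableSet_atom (t : Finset ι) (f : ι → Bool) : MeasurableSet (atom t f) := by
  simp only [atom, Set.ofPred_forall]
  exact .biInter t.countable_toSet fun i _ =>
    measurableSet_eq_fun (measurable_pi_apply i) measurable_const

lemma atom_union [DecidableEq ι] (s t : Finset ι) (f : ι → Bool) :
    atom (s ∪ t) f = atom s f ∩ atom t f := by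
  ext ω
  simp only [atom, Finset.mem_union, Set.mem_inter_iff, Set.mem_ofPred_eq]
  grind

lemma cylinder_singleton_eq_atom [DecidableEq ι] (Λ : Finset ι) (a : Λ → Bool)
    (f : ι → Bool) : (cylinder Λ {a} : Set (ι → Bool)) = atom Λ (updateFinset f Λ a) := by
  ext ω
  simp only [mem_cylinder, Set.mem_singleton_iff, funext_iff, Subtype.forall, atom,
    Set.mem_ofPred_eq]
  exact forall₂_congr fun i hi => by simp [updateFinset, hi]

theorem MeasureTheory.Measure.ext_of_measure_atom {ν₁ ν₂ : Measure (ι → Bool)}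
    [IsFiniteMeasure ν₁] (h : ∀ t f, ν₁ (atom t f) = ν₂ (atom t f)) : ν₁ = ν₂ := by
  classical
  have h_marginal (Λ : Finset ι) : ν₂.map Λ.restrict = ν₁.map Λ.restrict :=
    Measure.ext_iff_singleton.2 fun a => by
      rw [Measure.map_apply (Finset.measurable_restrict Λ) (measurableSet_singleton a),
        Measure.map_apply (Finset.measurable_restrict Λ) (measurableSet_singleton a)]
      change ν₂ (cylinder Λ {a}) = ν₁ (cylinder Λ {a})
      rw [cylinder_singleton_eq_atom Λ a fun _ => false, h]
  exact IsProjectiveLimit.unique (P := fun Λ => ν₁.map Λ.restrict) (fun _ => rfl) h_marginal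

end Atoms

lemma updateFinset_mono {ι : Type*} [DecidableEq ι] {π : ι → Type*} [∀ i, Preorder (π i)]
    (ω : ∀ i, π i) (Λ : Finset ι) {a b : ∀ i : Λ, π i} (hab : a ≤ b) :
    updateFinset ω Λ a ≤ updateFinset ω Λ b := by
  intro i
  by_cases hi : i ∈ Λ
  · simpa [updateFinset, hi] using hab ⟨i, hi⟩
  · simp [updateFinset, hi]

lemma inter_symmDiff_inter_subset {α : Type*} (A B D E : Set α) :
    (A ∩ B) ∆ (D ∩ E) ⊆ A ∆ D ∪ B ∆ E := by
  intro ω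
  simp only [Set.mem_symmDiff, Set.mem_inter_iff, Set.mem_union]
  tauto

lemma DecreasingEvent.biInter {I : Type*} {s : Finset I} {A : I → Set Config}
    (h : ∀ i ∈ s, DecreasingEvent (A i)) : DecreasingEvent (⋂ i ∈ s, A i) :=
  fun ω ω' hle hω =>
    Set.mem_iInter₂.2 fun i hi => h i hi ω ω' hle (Set.mem_iInter₂.1 hω i hi)

section MajorityVote

variable {Ω α : Type*} [MeasurableSpace Ω] [MeasurableSpace α] [Fintype α]
  [MeasurableSingletonClass α] {μ : Measure Ω} {π : Ω → α}

lemma measure_eq_sum_inter_fiber (hπ : Measurable π) (X : Set Ω) :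
    μ X = ∑ a, μ (π ⁻¹' {a} ∩ X) := by
  have hfib (a : α) : MeasurableSet (π ⁻¹' {a}) := hπ (measurableSet_singleton a)
  simpa [Measure.restrict_apply (hfib _), Set.inter_comm] using
    (sum_measure_preimage_singleton (μ := μ.restrict X) Finset.univ fun a _ => hfib a).symm

theorem measure_symmDiff_preimage_le_of_majority (hπ : Measurable π) {B : Set Ω} {S' : Set α}
    (h_mem : ∀ a ∈ S', μ (π ⁻¹' {a} \ B) ≤ μ (π ⁻¹' {a} ∩ B))
    (h_notMem : ∀ a ∉ S', μ (π ⁻¹' {a} ∩ B) ≤ μ (π ⁻¹' {a} \ B)) (S : Set α) :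
    μ (B ∆ (π ⁻¹' S')) ≤ μ (B ∆ (π ⁻¹' S)) := by
  classical
  have h_fiber (T : Set α) (a : α) : π ⁻¹' {a} ∩ (B ∆ (π ⁻¹' T)) =
      if a ∈ T then π ⁻¹' {a} \ B else π ⁻¹' {a} ∩ B := by
    ext ω
    by_cases ha : a ∈ T <;> by_cases hω : π ω = a <;> simp [Set.mem_symmDiff, ha, hω]
  rw [measure_eq_sum_inter_fiber hπ, measure_eq_sum_inter_fiber hπ (B ∆ _)]
  refine Finset.sum_le_sum fun a _ => ?_
  rw [h_fiber, h_fiber]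
  by_cases ha' : a ∈ S' <;> by_cases ha : a ∈ S <;>
    simp only [ha', ha, if_true, if_false, le_rfl]
  exacts [h_mem a ha', h_notMem a ha']

end MajorityVote

lemma IsLowerSet.antitone_indicator {α : Type*} [Preorder α] {U : Set α}
    (hU : IsLowerSet U) : Antitone (U.indicator (1 : α → ℝ)) := by
  intro a b hab
  by_cases hb : b ∈ U
  · simp [hb, hU hab hb]
  · simp only [Set.indicator_of_notMem hb]
    exact Set.indicator_nonneg (fun _ _ => zero_le_one) a

section FiniteLattice

variable {α : Type*} [Fintype α] [MeasurableSpace α] [MeasurableSingletonClass α]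

lemma measureReal_eq_sum_mul_indicator (ν : Measure α) [IsFiniteMeasure ν] (U : Set α) :
    ν.real U = ∑ a, ν.real {a} * U.indicator 1 a := by
  classical
  simp [Set.indicator_apply, ← Finset.sum_filter]

theorem measureReal_mul_measureReal_le_of_isLowerSet [DistribLattice α] {ν : Measure α}
    [IsProbabilityMeasure ν]
    (hν : ∀ a b, ν.real {a} * ν.real {b} ≤ ν.real {a ⊓ b} * ν.real {a ⊔ b})
    {S T : Set α} (hS : IsLowerSet S) (hT : IsLowerSet T) :
    ν.real S * ν.real T ≤ ν.real (S ∩ T) := by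
  have h : (∑ a, ν.real {a} * S.indicator 1 a) * ∑ a, ν.real {a} * T.indicator 1 a ≤
      (∑ a, ν.real {a}) * ∑ a, ν.real {a} * (S.indicator 1 a * T.indicator 1 a) :=
    fkg (α := αᵒᵈ) (μ := fun a => ν.real {ofDual a})
      (f := fun a => S.indicator 1 (ofDual a)) (g := fun a => T.indicator 1 (ofDual a))
      (fun _ => measureReal_nonneg) (fun _ => Set.indicator_nonneg (fun _ _ => zero_le_one) _)
      (fun _ => Set.indicator_nonneg (fun _ _ => zero_le_one) _)
      hS.antitone_indicator.dual_left hT.antitone_indicator.dual_left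
      (fun a b => (hν (ofDual a) (ofDual b)).trans_eq (mul_comm _ _))
  rw [measureReal_eq_sum_mul_indicator ν S, measureReal_eq_sum_mul_indicator ν T,
    measureReal_eq_sum_mul_indicator ν (S ∩ T), Set.inter_indicator_one]
  simpa using h

end FiniteLattice

namespace IsBernoulliProduct

variable {p : ℝ} {μ : Measure Config}

lemma measure_atom_union (hμ : IsBernoulliProduct p μ) {s t : Finset (ℤ × ℤ)}
    (hst : Disjoint s t) (f : Config) : μ (atom (s ∪ t) f) = μ (atom s f) * μ (atom t f) := by
  simp only [atom, hμ.2, Finset.prod_union hst]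

theorem restrict_cylinder_singleton (hμ : IsBernoulliProduct p μ) (Λ : Finset (ℤ × ℤ))
    (a : Λ → Bool) :
    μ.restrict (cylinder Λ {a}) = μ (cylinder Λ {a}) • μ.map (updateFinset · Λ a) := by
  have := hμ.1
  refine Measure.ext_of_measure_atom fun t f => ?_
  rw [Measure.restrict_apply (measurableSet_atom t f), Measure.smul_apply, smul_eq_mul,
    Measure.map_apply measurable_updateFinset_left (measurableSet_atom t f),
    cylinder_singleton_eq_atom Λ a f]
  set ξ := updateFinset f Λ a
  have hξ (ω : Config) {i} (hi : i ∈ Λ) : updateFinset ω Λ a i = ξ i := by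
    simp [ξ, updateFinset, hi]
  by_cases hc : ∀ i ∈ t, f i = ξ i
  · have h_inter : atom t f ∩ atom Λ ξ = atom (t \ Λ ∪ Λ) ξ := by
      rw [Finset.sdiff_union_self_eq_union, atom_union]
      congr 1
      ext ω
      exact forall₂_congr fun i hi => by rw [hc i hi]
    have h_pre : (updateFinset · Λ a) ⁻¹' atom t f = atom (t \ Λ) ξ := by
      ext ω
      simp only [Set.mem_preimage, atom, Set.mem_ofPred_eq, Finset.mem_sdiff]
      refine ⟨fun h i ⟨hit, hiΛ⟩ => ?_, fun h i hit => ?_⟩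
      · simpa [updateFinset, hiΛ, ← hc i hit] using h i hit
      · by_cases hiΛ : i ∈ Λ
        · rw [hξ ω hiΛ, hc i hit]
        · simpa [updateFinset, hiΛ, hc i hit] using h i ⟨hit, hiΛ⟩
    rw [h_inter, h_pre, hμ.measure_atom_union Finset.sdiff_disjoint, mul_comm]
  · push Not at hc
    obtain ⟨i, hit, hi⟩ := hc
    have hiΛ : i ∈ Λ := by
      by_contra hiΛ
      simp [ξ, updateFinset, hiΛ] at hi
    have h_inter : atom t f ∩ atom Λ ξ = ∅ :=
      Set.eq_empty_of_forall_notMem fun ω ⟨h₁, h₂⟩ =>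
        hi ((h₁ i hit).symm.trans (h₂ i hiΛ))
    have h_pre : (updateFinset · Λ a) ⁻¹' atom t f = ∅ :=
      Set.eq_empty_of_forall_notMem fun ω h => hi ((h i hit).symm.trans (hξ ω hiΛ))
    rw [h_inter, h_pre, measure_empty, mul_zero]

lemma map_restrict_singleton (hμ : IsBernoulliProduct p μ) (Λ : Finset (ℤ × ℤ))
    (a : Λ → Bool) :
    μ.map Λ.restrict {a} = ∏ v, ENNReal.ofReal (if a v then p else 1 - p) := by
  rw [Measure.map_apply (Finset.measurable_restrict Λ) (measurableSet_singleton a)]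
  change μ (cylinder Λ {a}) = _
  rw [cylinder_singleton_eq_atom Λ a (fun _ => false), atom, hμ.2, ← Finset.prod_coe_sort]
  simp [updateFinset]

lemma map_restrict_singleton_inf_mul_sup (hμ : IsBernoulliProduct p μ) (Λ : Finset (ℤ × ℤ))
    (a b : Λ → Bool) :
    μ.map Λ.restrict {a ⊓ b} * μ.map Λ.restrict {a ⊔ b} =
      μ.map Λ.restrict {a} * μ.map Λ.restrict {b} := by
  simp only [hμ.map_restrict_singleton, ← Finset.prod_mul_distrib]
  refine Finset.prod_congr rfl fun v _ => ?_
  rw [Pi.inf_apply, Pi.sup_apply]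
  cases a v <;> cases b v <;> simp [mul_comm]

theorem measureReal_cylinder_mul_le (hμ : IsBernoulliProduct p μ) (Λ : Finset (ℤ × ℤ))
    {S T : Set (Λ → Bool)} (hS : IsLowerSet S) (hT : IsLowerSet T) :
    μ.real (cylinder Λ S) * μ.real (cylinder Λ T) ≤
      μ.real (cylinder Λ S ∩ cylinder Λ T) := by
  have := hμ.1
  have : IsProbabilityMeasure (μ.map (Λ.restrict : Config → Λ → Bool)) :=
    Measure.isProbabilityMeasure_map (Finset.measurable_restrict Λ).aemeasurable
  rw [inter_cylinder_same]
  simp only [cylinder, ← map_measureReal_apply (Finset.measurable_restrict Λ)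
    (MeasurableSet.of_discrete)]
  refine measureReal_mul_measureReal_le_of_isLowerSet (ν := μ.map Λ.restrict)
    (fun a b => ?_) hS hT
  simp only [measureReal_def, ← ENNReal.toReal_mul, hμ.map_restrict_singleton_inf_mul_sup,
    le_rfl]

theorem exists_isLowerSet_measure_symmDiff_le (hμ : IsBernoulliProduct p μ) {A : Set Config}
    (hA : MeasurableSet A) (hA_dec : DecreasingEvent A) (Λ : Finset (ℤ × ℤ))
    (S : Set (Λ → Bool)) :
    ∃ S' : Set (Λ → Bool), IsLowerSet S' ∧
      μ (A ∆ cylinder Λ S') ≤ μ (A ∆ cylinder Λ S) := by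
  set ν : (Λ → Bool) → Measure Config := fun a => μ.map (updateFinset · Λ a)
  have h_fiber (a : Λ → Bool) {X : Set Config} (hX : MeasurableSet X) :
      μ (cylinder Λ {a} ∩ X) = μ (cylinder Λ {a}) * ν a X := by
    have h_meas : MeasurableSet (cylinder Λ {a} : Set Config) :=
      .cylinder Λ (measurableSet_singleton a)
    rw [Set.inter_comm, ← Measure.restrict_apply' h_meas,
      hμ.restrict_cylinder_singleton, Measure.smul_apply, smul_eq_mul]
  have h_sub {a b : Λ → Bool} (hba : b ≤ a) :
      (updateFinset · Λ a) ⁻¹' A ⊆ (updateFinset · Λ b) ⁻¹' A :=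
    fun ω hω => hA_dec _ _ (updateFinset_mono ω Λ hba) hω
  refine ⟨{a | ν a Aᶜ ≤ ν a A}, fun a b hba ha => ?_,
    measure_symmDiff_preimage_le_of_majority
      (Finset.measurable_restrict (X := fun _ => Bool) Λ) (fun a ha => ?_) (fun a ha => ?_) S⟩
  · simp only [Set.mem_ofPred_eq, ν, Measure.map_apply measurable_updateFinset_left hA,
      Measure.map_apply measurable_updateFinset_left hA.compl, Set.preimage_compl] at ha ⊢
    exact (measure_mono (Set.compl_subset_compl.2 (h_sub hba))).trans <|
      ha.trans (measure_mono (h_sub hba))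
  · change μ (cylinder Λ {a} \ A) ≤ μ (cylinder Λ {a} ∩ A)
    rw [Set.sdiff_eq, h_fiber a hA.compl, h_fiber a hA]
    exact mul_le_mul_right ha _
  · change μ (cylinder Λ {a} ∩ A) ≤ μ (cylinder Λ {a} \ A)
    rw [Set.sdiff_eq, h_fiber a hA.compl, h_fiber a hA]
    exact mul_le_mul_right (not_le.mp ha).le _

theorem exists_isLowerSet_measure_symmDiff_lt (hμ : IsBernoulliProduct p μ) {A : Set Config}
    (hA : MeasurableSet A) (hA_dec : DecreasingEvent A) {ε : ℝ≥0∞} (hε : 0 < ε) :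
    ∃ Λ₀ : Finset (ℤ × ℤ), ∀ Λ, Λ₀ ⊆ Λ →
      ∃ S : Set (Λ → Bool), IsLowerSet S ∧ μ (A ∆ cylinder Λ S) < ε := by
  have := hμ.1
  obtain ⟨t, ht, hlt⟩ := exists_measure_symmDiff_lt_of_generateFrom_isSetRing (μ := μ)
    (isSetRing_measurableCylinders (α := fun _ : ℤ × ℤ => Bool))
    ⟨{Set.univ}, Set.countable_singleton _,
      by simpa using univ_mem_measurableCylinders (fun _ : ℤ × ℤ => Bool), by simp⟩
    generateFrom_measurableCylinders.symm hA hε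
  obtain ⟨Λ₀, S₀, -, rfl⟩ := (mem_measurableCylinders t).1 ht
  refine ⟨Λ₀, fun Λ hΛ => ?_⟩
  obtain ⟨S, hS, hle⟩ :=
    hμ.exists_isLowerSet_measure_symmDiff_le hA hA_dec Λ
      (Finset.restrict₂ (π := fun _ => Bool) hΛ ⁻¹' S₀)
  rw [symmDiff_comm] at hlt
  exact ⟨S, hS, hle.trans_lt hlt⟩

theorem measureReal_mul_le_measureReal_inter (hμ : IsBernoulliProduct p μ) {A B : Set Config}
    (hA : MeasurableSet A) (hB : MeasurableSet B) (hA_dec : DecreasingEvent A)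
    (hB_dec : DecreasingEvent B) : μ.real A * μ.real B ≤ μ.real (A ∩ B) := by
  have := hμ.1
  refine le_of_forall_pos_lt_add fun ε hε => ?_
  have hδ : 0 < ENNReal.ofReal (ε / 4) := ENNReal.ofReal_pos.2 (by positivity)
  obtain ⟨ΛA, hΛA⟩ := hμ.exists_isLowerSet_measure_symmDiff_lt hA hA_dec hδ
  obtain ⟨ΛB, hΛB⟩ := hμ.exists_isLowerSet_measure_symmDiff_lt hB hB_dec hδ
  obtain ⟨S, hS, hAD⟩ := hΛA (ΛA ∪ ΛB) Finset.subset_union_left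
  obtain ⟨T, hT, hBE⟩ := hΛB (ΛA ∪ ΛB) Finset.subset_union_right
  set D : Set Config := cylinder (ΛA ∪ ΛB) S
  set E : Set Config := cylinder (ΛA ∪ ΛB) T
  have hD : MeasurableSet D := .cylinder _ .of_discrete
  have hE : MeasurableSet E := .cylinder _ .of_discrete
  replace hAD : μ.real (A ∆ D) < ε / 4 := ENNReal.toReal_lt_of_lt_ofReal hAD
  replace hBE : μ.real (B ∆ E) < ε / 4 := ENNReal.toReal_lt_of_lt_ofReal hBE
  have h_close (X Y : Set Config) (hX : MeasurableSet X) (hY : MeasurableSet Y) :=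
    abs_le.1 (abs_measureReal_sub_le_measureReal_symmDiff (μ := μ) hX.nullMeasurableSet
      hY.nullMeasurableSet)
  have h_prod :
      μ.real A * μ.real B ≤ μ.real D * μ.real E + μ.real (A ∆ D) + μ.real (B ∆ E) := by
    have := h_close A D hA hD
    have := h_close B E hB hE
    -- `a b - d e = a (b - e) + e (a - d)` with `0 ≤ a, e ≤ 1`
    nlinarith [measureReal_nonneg (μ := μ) (s := A), measureReal_nonneg (μ := μ) (s := E),
      measureReal_le_one (μ := μ) (s := A), measureReal_le_one (μ := μ) (s := E),
      measureReal_nonneg (μ := μ) (s := A ∆ D), measureReal_nonneg (μ := μ) (s := B ∆ E)]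
  have h_inter : μ.real ((A ∩ B) ∆ (D ∩ E)) ≤ μ.real (A ∆ D) + μ.real (B ∆ E) :=
    (measureReal_mono (inter_symmDiff_inter_subset A B D E)).trans (measureReal_union_le _ _)
  have h_harris : μ.real D * μ.real E ≤ μ.real (D ∩ E) :=
    hμ.measureReal_cylinder_mul_le _ hS hT
  linarith [h_close (A ∩ B) (D ∩ E) (hA.inter hB) (hD.inter hE)]

theorem measure_mul_le_measure_inter (hμ : IsBernoulliProduct p μ) {A B : Set Config}
    (hA : MeasurableSet A) (hB : MeasurableSet B) (hA_dec : DecreasingEvent A)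
    (hB_dec : DecreasingEvent B) : μ A * μ B ≤ μ (A ∩ B) := by
  have := hμ.1
  rw [← ENNReal.toReal_le_toReal (by finiteness) (by finiteness), ENNReal.toReal_mul]
  exact hμ.measureReal_mul_le_measureReal_inter hA hB hA_dec hB_dec

end IsBernoulliProduct

theorem fkg_finite_family_general {I : Type*} (s : Finset I)
    (p : ℝ)
    (μ : Measure Config) (hμ : IsBernoulliProduct p μ)
    (A : I → Set Config) (hmeas : ∀ i ∈ s, MeasurableSet (A i))
    (hdec : ∀ i ∈ s, DecreasingEvent (A i)) :
    ∏ i ∈ s, μ (A i) ≤ μ (⋂ i ∈ s, A i) := by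
  classical
  have := hμ.1
  induction s using Finset.induction_on with
  | empty => simp
  | insert j s hj ih =>
    simp only [Finset.mem_insert, forall_eq_or_imp] at hmeas hdec
    rw [Finset.prod_insert hj, Finset.set_biInter_insert]
    calc μ (A j) * ∏ i ∈ s, μ (A i) ≤ μ (A j) * μ (⋂ i ∈ s, A i) := by
          gcongr
          exact ih hmeas.2 hdec.2
      _ ≤ μ (A j ∩ ⋂ i ∈ s, A i) :=
          hμ.measure_mul_le_measure_inter hmeas.1 (.biInter s.countable_toSet hmeas.2) hdec.1
            (.biInter hdec.2)

/-- Consider the product Bernoulli(`p`) measure `P_p` on configurations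
`ω : ℤ × ℤ → Bool`. If `(A_i)_{i ∈ I}` is a finite family of measurable decreasing events,
then `P_p(⋂_{i ∈ I} A_i) ≥ ∏_{i ∈ I} P_p(A_i)`. -/
theorem fkg_finite_family {I : Type*} (s : Finset I)
    (p : ℝ) (hp : p ∈ Set.Icc (0 : ℝ) 1)
    (μ : Measure Config) (hμ : IsBernoulliProduct p μ)
    (A : I → Set Config) (hmeas : ∀ i ∈ s, MeasurableSet (A i))
    (hdec : ∀ i ∈ s, DecreasingEvent (A i)) :
    ∏ i ∈ s, μ (A i) ≤ μ (⋂ i ∈ s, A i) :=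
  fkg_finite_family_general s p μ hμ A hmeas hdec
end
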